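/- Let ω > 1, s > 1, ε > 0, and τ ≥ √2·(s+ε). Define α_x = √(1 - x²·2^{-2ω}) for x with x·2^{-ω} ≤ 1. Then α_τ < α_s · α_{s+ε}. -/
import Mathlib


/-- With α_x = √(1 - x²·2^{-2ω}), if ω > 1, s > 1, ε > 0 and τ ≥ √2(s+ε) (with τ·2^{-ω} ≤ 1),
then α_τ < α_s · α_{s+ε}. -/
theorem stmt2 (ω s ε τ : ℝ) (hω : 1 < ω) (hs : 1 < s) (hε : 0 < ε)
    (hτ : Real.sqrt 2 * (s + ε) ≤ τ) (hτ1 : τ * (2 : ℝ) ^ (-ω) ≤ 1) :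
    Real.sqrt (1 - τ ^ 2 * (2 : ℝ) ^ (-(2 * ω))) <
      Real.sqrt (1 - s ^ 2 * (2 : ℝ) ^ (-(2 * ω))) *
        Real.sqrt (1 - (s + ε) ^ 2 * (2 : ℝ) ^ (-(2 * ω))) := by
  set q : ℝ := (2 : ℝ) ^ (-(2 * ω)) with hq
  have hq0 : 0 < q := Real.rpow_pos_of_pos (by norm_num) _
  have hp0 : 0 < (2 : ℝ) ^ (-ω) := Real.rpow_pos_of_pos (by norm_num) _
  have hqsq : q = ((2 : ℝ) ^ (-ω)) ^ 2 := by
    rw [hq, show -(2 * ω) = (-ω) * 2 by ring, Real.rpow_mul (by norm_num), Real.rpow_two]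
  have hsq2 : Real.sqrt 2 ^ 2 = 2 := Real.sq_sqrt (by norm_num)
  have h2 : 1 < Real.sqrt 2 := by nlinarith [Real.sqrt_nonneg 2]
  have hτ0 : 0 < τ := lt_of_lt_of_le (by positivity) hτ
  have hτq : τ ^ 2 * q ≤ 1 := by
    rw [hqsq]; nlinarith [mul_nonneg hτ0.le hp0.le]
  have hτ2 : 2 * (s + ε) ^ 2 ≤ τ ^ 2 := by
    nlinarith [mul_le_mul hτ hτ (by positivity) hτ0.le]
  have hsτ : s + ε < τ := by nlinarith
  have hsq : s ^ 2 * q < 1 := by nlinarith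
  have hseq : (s + ε) ^ 2 * q < 1 := by nlinarith
  rw [← Real.sqrt_mul (by nlinarith)]
  apply Real.sqrt_lt_sqrt (by nlinarith)
  have key : s ^ 2 + (s + ε) ^ 2 < τ ^ 2 := by nlinarith
  nlinarith [mul_lt_mul_of_pos_right key hq0, mul_pos (mul_pos hq0 hq0) (mul_pos (pow_pos (by linarith : (0:ℝ) < s) 2) (pow_pos (by linarith : (0:ℝ) < s + ε) 2))]
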